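/- Let ⟨D, S, R⟩ be a DT problem. Then irc_{⟨D,S,R⟩}(n) ≤ irc_{S/((D∖S)∪R)}(n) for all n ∈ ℕ: the runtime complexity of the DT problem is bounded by the innermost runtime complexity of the relative TRS S/((D∖S)∪R). -/

import Mathlib

namespace ParallelComplexity

/-! ## First-order terms -/

inductive Term (σ : Type) (V : Type) : Type where
  | var : V → Term σ V
  | fn : σ → List (Term σ V) → Term σ V

variable {σ V : Type}

mutual
  /-- Application of a substitution to a term. -/
  def Term.subst (θ : V → Term σ V) : Term σ V → Term σ V
    | Term.var x => θ x
    | Term.fn f ts => Term.fn f (Term.substList θ ts)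
  def Term.substList (θ : V → Term σ V) : List (Term σ V) → List (Term σ V)
    | [] => []
    | t :: ts => Term.subst θ t :: Term.substList θ ts
end

mutual
  /-- The size |t| of a term. -/
  def Term.size : Term σ V → ℕ
    | Term.var _ => 1
    | Term.fn _ ts => 1 + Term.sizeList ts
  def Term.sizeList : List (Term σ V) → ℕ
    | [] => 0
    | t :: ts => Term.size t + Term.sizeList ts
end

/-- Subterm `t|π` at a position (positions are lists of argument indices);
`none` if the position is not a position of `t`. -/
def Term.subtermAt : Term σ V → List ℕ → Option (Term σ V)
  | t, [] => some t
  | Term.var _, _ :: _ => none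
  | Term.fn _ ts, i :: π =>
    match ts[i]? with
    | none => none
    | some u => Term.subtermAt u π

/-- `t[s]π`: replacement of the subterm at position `π` by `s`. -/
def Term.replaceAt : Term σ V → List ℕ → Term σ V → Option (Term σ V)
  | _, [], s => some s
  | Term.var _, _ :: _, _ => none
  | Term.fn f ts, i :: π, s =>
    match ts[i]? with
    | none => none
    | some u =>
      match Term.replaceAt u π s with
      | none => none
      | some u' => some (Term.fn f (ts.set i u'))

def Term.isVar (t : Term σ V) : Prop := ∃ x, t = Term.var x

/-- `x` occurs as a variable in the term. -/
inductive Term.VarIn (x : V) : Term σ V → Prop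
  | var : Term.VarIn x (Term.var x)
  | fn {f : σ} {ts : List (Term σ V)} {t : Term σ V} :
      t ∈ ts → Term.VarIn x t → Term.VarIn x (Term.fn f ts)

/-! ## Term rewrite systems -/

structure Rule (σ V : Type) where
  lhs : Term σ V
  rhs : Term σ V

/-- A well-formed TRS: a finite set of rules `ℓ → r` with `ℓ ∉ V` and
`Var(r) ⊆ Var(ℓ)`. -/
def IsWfTRS (R : Set (Rule σ V)) : Prop :=
  R.Finite ∧ (∀ r ∈ R, ¬ r.lhs.isVar) ∧
    ∀ r ∈ R, ∀ x : V, Term.VarIn x r.rhs → Term.VarIn x r.lhs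

def IsRedex (R : Set (Rule σ V)) (t : Term σ V) : Prop :=
  ∃ r ∈ R, ∃ θ : V → Term σ V, t = Term.subst θ r.lhs

/-- An innermost redex: a redex none of whose proper subterms is a redex. -/
def IsInnermostRedex (R : Set (Rule σ V)) (t : Term σ V) : Prop :=
  IsRedex R t ∧
    ∀ π : List ℕ, π ≠ [] → ∀ u, t.subtermAt π = some u → ¬ IsRedex R u

/-- One rewrite step at position `π`. -/
def RewriteAt (R : Set (Rule σ V)) (π : List ℕ) (s t : Term σ V) : Prop :=
  ∃ r ∈ R, ∃ θ : V → Term σ V,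
    s.subtermAt π = some (Term.subst θ r.lhs) ∧
    s.replaceAt π (Term.subst θ r.rhs) = some t

/-- The rewrite relation `s →_R t`. -/
def Rewrite (R : Set (Rule σ V)) (s t : Term σ V) : Prop := ∃ π, RewriteAt R π s t

/-- The innermost rewrite relation `s →i t`. -/
def InnermostRewrite (R : Set (Rule σ V)) (s t : Term σ V) : Prop :=
  ∃ π, ∃ r ∈ R, ∃ θ : V → Term σ V,
    s.subtermAt π = some (Term.subst θ r.lhs) ∧
    IsInnermostRedex R (Term.subst θ r.lhs) ∧
    s.replaceAt π (Term.subst θ r.rhs) = some t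

def NormalForm (R : Set (Rule σ V)) (t : Term σ V) : Prop := ¬ ∃ u, Rewrite R t u

/-- Parallel-innermost rewriting `s ⇉ t`: `s →i⁺ t` and either
(a) `s` is an innermost redex and `s →i t`, or (b) `s = f(s₁,…,sₙ)`,
`t = f(t₁,…,tₙ)` and each `sₖ ⇉ tₖ` or `sₖ = tₖ` is a normal form. -/
inductive ParInnermost (R : Set (Rule σ V)) : Term σ V → Term σ V → Prop
  | redex {s t : Term σ V} :
      Relation.TransGen (InnermostRewrite R) s t →
      IsInnermostRedex R s → InnermostRewrite R s t → ParInnermost R s t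
  | congr (f : σ) (ss ts : List (Term σ V)) :
      Relation.TransGen (InnermostRewrite R) (Term.fn f ss) (Term.fn f ts) →
      ss.length = ts.length →
      -- each `sₖ ⇉ tₖ`, or `sₖ = tₖ` is a normal form (stated as the
      -- classically equivalent implication to satisfy the kernel's
      -- restrictions on nested inductive occurrences)
      (∀ p ∈ ss.zip ts, ¬ (p.1 = p.2 ∧ NormalForm R p.1) → ParInnermost R p.1 p.2) →
      ParInnermost R (Term.fn f ss) (Term.fn f ts)

/-! ## Abstract properties of relations -/

def Confluent {α : Type} (r : α → α → Prop) : Prop :=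
  ∀ s t u, Relation.ReflTransGen r s t → Relation.ReflTransGen r s u →
    ∃ v, Relation.ReflTransGen r t v ∧ Relation.ReflTransGen r u v

def Deterministic {α : Type} (r : α → α → Prop) : Prop :=
  ∀ s t u, r s t → r s u → t = u

def UniformlyConfluent {α : Type} (r : α → α → Prop) : Prop :=
  ∀ s t u, r s t → r s u → t = u ∨ ∃ v, r t v ∧ r u v

/-! ## Derivation height and runtime complexity -/

/-- `e`-th iterate of a relation. -/
def iterRel {α : Type} (r : α → α → Prop) : ℕ → α → α → Prop
  | 0 => fun a b => a = b
  | n + 1 => fun a c => ∃ b, r a b ∧ iterRel r n b c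

/-- Derivation height `Dh(t, →) = sup { e | ∃ t'. t →^e t' } ∈ ℕ ∪ {ω}`. -/
noncomputable def Dh {α : Type} (r : α → α → Prop) (t : α) : ℕ∞ :=
  sSup { e : ℕ∞ | ∃ n : ℕ, e = (n : ℕ∞) ∧ ∃ t', iterRel r n t t' }

/-- Defined symbols: root symbols of left-hand sides. -/
def Defined (R : Set (Rule σ V)) (f : σ) : Prop :=
  ∃ r ∈ R, ∃ ts : List (Term σ V), r.lhs = Term.fn f ts

def HasDefinedRoot (R : Set (Rule σ V)) (t : Term σ V) : Prop :=
  ∃ f ts, t = Term.fn f ts ∧ Defined R f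

/-- Constructor terms: terms over constructor symbols and variables. -/
inductive ConsTerm (R : Set (Rule σ V)) : Term σ V → Prop
  | var (x : V) : ConsTerm R (Term.var x)
  | fn (f : σ) (ts : List (Term σ V)) :
      ¬ Defined R f → (∀ t ∈ ts, ConsTerm R t) → ConsTerm R (Term.fn f ts)

/-- Basic terms: a defined symbol applied to constructor terms. -/
def BasicTerm (R : Set (Rule σ V)) (t : Term σ V) : Prop :=
  ∃ f ts, t = Term.fn f ts ∧ Defined R f ∧ ∀ u ∈ ts, ConsTerm R u

/-- Innermost runtime complexity. -/
noncomputable def irc (R : Set (Rule σ V)) (n : ℕ) : ℕ∞ :=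
  sSup { d : ℕ∞ | ∃ t, BasicTerm R t ∧ t.size ≤ n ∧ d = Dh (InnermostRewrite R) t }

/-- Parallel-innermost runtime complexity. -/
noncomputable def pirc (R : Set (Rule σ V)) (n : ℕ) : ℕ∞ :=
  sSup { d : ℕ∞ | ∃ t, BasicTerm R t ∧ t.size ≤ n ∧ d = Dh (ParInnermost R) t }

/-! ## Critical pairs -/

def RuleVars (r : Rule σ V) : Set V :=
  { x | Term.VarIn x r.lhs ∨ Term.VarIn x r.rhs }

/-- `r₂` is a variant of `r₁` (each is a substitution instance of the other). -/
def IsVariantOf (r₁ r₂ : Rule σ V) : Prop :=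
  ∃ θ₁ θ₂ : V → Term σ V,
    r₂.lhs = Term.subst θ₁ r₁.lhs ∧ r₂.rhs = Term.subst θ₁ r₁.rhs ∧
    r₁.lhs = Term.subst θ₂ r₂.lhs ∧ r₁.rhs = Term.subst θ₂ r₂.rhs

def Unifies (θ : V → Term σ V) (s t : Term σ V) : Prop :=
  Term.subst θ s = Term.subst θ t

def IsMGU (μ : V → Term σ V) (s t : Term σ V) : Prop :=
  Unifies μ s t ∧
    ∀ δ : V → Term σ V, Unifies δ s t →
      ∃ δ' : V → Term σ V, ∀ x : V, Term.subst δ' (μ x) = δ x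

/-- Critical pairs `⟨uσ[rσ]π, vσ⟩` of a TRS, from variable-renamed copies
`ℓ → r` and `u → v` of rules of `R` overlapping at a non-variable position
`π` of `u` (not a root overlap of variants of the same rule). -/
def CriticalPair (R : Set (Rule σ V)) (cp : Term σ V × Term σ V) : Prop :=
  ∃ r₁ r₂ r₁' r₂' : Rule σ V, r₁' ∈ R ∧ r₂' ∈ R ∧
    IsVariantOf r₁' r₁ ∧ IsVariantOf r₂' r₂ ∧
    (∀ x : V, x ∈ RuleVars r₁ → x ∉ RuleVars r₂) ∧
    ∃ (π : List ℕ) (u' : Term σ V),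
      r₂.lhs.subtermAt π = some u' ∧ ¬ u'.isVar ∧
      (π = [] → ¬ IsVariantOf r₁ r₂) ∧
      ∃ μ : V → Term σ V, IsMGU μ r₁.lhs u' ∧
        ∃ w : Term σ V,
          (Term.subst μ r₂.lhs).replaceAt π (Term.subst μ r₁.rhs) = some w ∧
          cp = (w, Term.subst μ r₂.rhs)

/-- `R` is non-overlapping iff it has no critical pairs. -/
def NonOverlapping (R : Set (Rule σ V)) : Prop := ∀ cp, ¬ CriticalPair R cp

/-- An innermost critical overlay: a critical pair at the root position whose
critical peak consists of two innermost rewrite steps. -/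
def InnermostCriticalOverlay (R : Set (Rule σ V)) (cp : Term σ V × Term σ V) : Prop :=
  ∃ r₁ r₂ r₁' r₂' : Rule σ V, r₁' ∈ R ∧ r₂' ∈ R ∧
    IsVariantOf r₁' r₁ ∧ IsVariantOf r₂' r₂ ∧
    (∀ x : V, x ∈ RuleVars r₁ → x ∉ RuleVars r₂) ∧
    ¬ IsVariantOf r₁ r₂ ∧
    ∃ μ : V → Term σ V, IsMGU μ r₁.lhs r₂.lhs ∧
      IsInnermostRedex R (Term.subst μ r₂.lhs) ∧
      cp = (Term.subst μ r₁.rhs, Term.subst μ r₂.rhs)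

/-! ## Positions with defined symbols and structural dependency chains -/

/-- Strict prefix order on positions: `PosGT τ π` iff `τ > π`,
i.e. `∃ π' ≠ ε, π π' = τ`. -/
def PosGT (τ π : List ℕ) : Prop := ∃ π' : List ℕ, π' ≠ [] ∧ π ++ π' = τ

/-- `PosD(t)`: positions of `t` with defined root symbol. -/
def PosD (R : Set (Rule σ V)) (t : Term σ V) : Set (List ℕ) :=
  { π | ∃ u, t.subtermAt π = some u ∧ HasDefinedRoot R u }

/-- Structural dependency chain `⟨π₁,…,πₖ⟩` for `t`: positions in `PosD(t)`
with `π₁ > … > πₖ`. -/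
def SDChain (R : Set (Rule σ V)) (t : Term σ V) (c : List (List ℕ)) : Prop :=
  (∀ π ∈ c, π ∈ PosD R t) ∧ c.Chain' PosGT

/-- Maximal structural dependency chains: `MSDC R t c` iff `c` is a maximal
structural dependency chain for `t`. -/
def MSDC (R : Set (Rule σ V)) (t : Term σ V) (c : List (List ℕ)) : Prop :=
  SDChain R t c ∧
    ((c = [] ∧ PosD R t = ∅) ∨
      ∃ (π₁ : List ℕ) (rest : List (List ℕ)), c = π₁ :: rest ∧
        ∀ π ∈ PosD R t, ¬ PosGT π π₁ ∧ (PosGT π₁ π → π ∈ rest))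

/-! ## Sharp terms, dependency tuples -/

/-- Extended signature: base symbols, sharp symbols `f#`, compound symbols `Com_n`. -/
inductive SharpSym (σ : Type) : Type where
  | base : σ → SharpSym σ
  | sharp : σ → SharpSym σ
  | com : ℕ → SharpSym σ

mutual
  def Term.embed : Term σ V → Term (SharpSym σ) V
    | Term.var x => Term.var x
    | Term.fn f ts => Term.fn (SharpSym.base f) (Term.embedList ts)
  def Term.embedList : List (Term σ V) → List (Term (SharpSym σ) V)
    | [] => []
    | t :: ts => Term.embed t :: Term.embedList ts
end

open Classical in
/-- `t#`: mark the root of `t` with its sharp symbol (if defined). -/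
noncomputable def Term.sharp (R : Set (Rule σ V)) : Term σ V → Term (SharpSym σ) V
  | Term.var x => Term.var x
  | Term.fn f ts =>
    if Defined R f then Term.fn (SharpSym.sharp f) (Term.embedList ts)
    else Term.fn (SharpSym.base f) (Term.embedList ts)

open Classical in
/-- Sharping on terms over the extended signature: for `t = f(…)` with `f` a
defined (base) symbol of `R`, mark the root; otherwise `t# = t`. -/
noncomputable def sharpC (R : Set (Rule σ V)) : Term (SharpSym σ) V → Term (SharpSym σ) V
  | Term.fn (SharpSym.base f) ts =>
    if Defined R f then Term.fn (SharpSym.sharp f) ts else Term.fn (SharpSym.base f) ts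
  | t => t

def liftRule (r : Rule σ V) : Rule (SharpSym σ) V :=
  { lhs := r.lhs.embed, rhs := r.rhs.embed }

def liftRules (R : Set (Rule σ V)) : Set (Rule (SharpSym σ) V) := liftRule '' R

/-- The dependency tuple `ℓ# → Com_k(u₁#,…,uₖ#)` built from subterms `u₁,…,uₖ`
of the right-hand side. -/
noncomputable def mkDT (R : Set (Rule σ V)) (ρ : Rule σ V) (us : List (Term σ V)) :
    Rule (SharpSym σ) V :=
  { lhs := Term.sharp R ρ.lhs,
    rhs := Term.fn (SharpSym.com us.length) (us.map (Term.sharp R)) }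

/-- `DTpar(ℓ → r)`: one dependency tuple per maximal structural dependency chain. -/
def DTparRule (R : Set (Rule σ V)) (ρ : Rule σ V) : Set (Rule (SharpSym σ) V) :=
  { d | ∃ (c : List (List ℕ)) (us : List (Term σ V)),
      MSDC R ρ.rhs c ∧
      List.Forall₂ (fun π u => ρ.rhs.subtermAt π = some u) c us ∧
      d = mkDT R ρ us }

/-- `DTpar(R)`. -/
def DTparSet (R : Set (Rule σ V)) : Set (Rule (SharpSym σ) V) :=
  ⋃ ρ ∈ R, DTparRule R ρ

/-! ## Chain trees and Cplx -/

/-- A (possibly infinite, finitely branching) tree whose nodes (addressed by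
paths) are labelled with a dependency tuple and a substitution; the child at
direction `i` corresponds to argument `i` of the `Com` symbol. -/
structure ChainTree (σ V : Type) where
  label : List ℕ → Option (Rule (SharpSym σ) V × (V → Term (SharpSym σ) V))

/-- `T` is a `(D,R)`-chain tree for the sharp term `t`. -/
def IsChainTree (D R : Set (Rule (SharpSym σ) V)) (T : ChainTree σ V)
    (t : Term (SharpSym σ) V) : Prop :=
  (∃ r ν, T.label [] = some (r, ν) ∧ Term.subst ν r.lhs = t) ∧
  (∀ (p : List ℕ) (i : ℕ), T.label (p ++ [i]) ≠ none → T.label p ≠ none) ∧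
  (∀ (p : List ℕ) (r : Rule (SharpSym σ) V) (ν : V → Term (SharpSym σ) V),
    T.label p = some (r, ν) →
      r ∈ D ∧ NormalForm R (Term.subst ν r.lhs) ∧
      ∀ (i : ℕ) (r' : Rule (SharpSym σ) V) (δ : V → Term (SharpSym σ) V),
        T.label (p ++ [i]) = some (r', δ) →
          ∃ (m : ℕ) (vs : List (Term (SharpSym σ) V)),
            r.rhs = Term.fn (SharpSym.com m) vs ∧
            ∃ v, vs[i]? = some v ∧
              Relation.ReflTransGen (InnermostRewrite R)
                (Term.subst ν v) (Term.subst δ r'.lhs))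

/-- `|T|_S`: the number of nodes of `T` labelled with a DT from `S`. -/
noncomputable def treeCount (T : ChainTree σ V) (S : Set (Rule (SharpSym σ) V)) : ℕ∞ :=
  Set.encard { p : List ℕ | ∃ r ν, T.label p = some (r, ν) ∧ r ∈ S }

/-- `Cplx⟨D,S,R⟩(t)`: the supremum of `|T|_S` over all `(D,R)`-chain trees `T`
for `t` (`0` if there is no chain tree). -/
noncomputable def Cplx (D S R : Set (Rule (SharpSym σ) V))
    (t : Term (SharpSym σ) V) : ℕ∞ :=
  sSup { c : ℕ∞ | ∃ T : ChainTree σ V, IsChainTree D R T t ∧ c = treeCount T S }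

/-- `irc⟨D,S,R⟩(n)`: runtime complexity of a DT problem. -/
noncomputable def ircDTP (D S : Set (Rule (SharpSym σ) V)) (R : Set (Rule σ V))
    (n : ℕ) : ℕ∞ :=
  sSup { c : ℕ∞ | ∃ t : Term σ V, BasicTerm R t ∧ t.size ≤ n ∧
    c = Cplx D S (liftRules R) (Term.sharp R t) }

/-! ## Relative rewriting -/

/-- An innermost rewrite step using a rule from `X`, with innermost-ness
relative to the whole system `W`. -/
def InnermostRewriteSub (W X : Set (Rule σ V)) (s t : Term σ V) : Prop :=
  ∃ π, ∃ r ∈ X, ∃ θ : V → Term σ V,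
    s.subtermAt π = some (Term.subst θ r.lhs) ∧
    IsInnermostRedex W (Term.subst θ r.lhs) ∧
    s.replaceAt π (Term.subst θ r.rhs) = some t

/-- Innermost relative rewriting `→i_{A/B}`:
`s →B* s' →A s'' →B* t`, all steps innermost wrt `A ∪ B`. -/
def RelInnermost (A B : Set (Rule σ V)) (s t : Term σ V) : Prop :=
  ∃ s' s'' : Term σ V,
    Relation.ReflTransGen (InnermostRewriteSub (A ∪ B) B) s s' ∧
    InnermostRewriteSub (A ∪ B) A s' s'' ∧
    Relation.ReflTransGen (InnermostRewriteSub (A ∪ B) B) s'' t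

/-- Innermost runtime complexity of a relative TRS `A/B`. -/
noncomputable def ircRel (A B : Set (Rule σ V)) (n : ℕ) : ℕ∞ :=
  sSup { d : ℕ∞ | ∃ t : Term σ V, BasicTerm (A ∪ B) t ∧ t.size ≤ n ∧
    d = Dh (RelInnermost A B) t }

/-! ## Dependency tuples (abstract DT problems) -/

inductive IsBaseTerm : Term (SharpSym σ) V → Prop
  | var (x : V) : IsBaseTerm (Term.var x)
  | fn (f : σ) (ts : List (Term (SharpSym σ) V)) :
      (∀ t ∈ ts, IsBaseTerm t) → IsBaseTerm (Term.fn (SharpSym.base f) ts)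

def IsSharpTerm (t : Term (SharpSym σ) V) : Prop :=
  ∃ (f : σ) (args : List (Term (SharpSym σ) V)),
    t = Term.fn (SharpSym.sharp f) args ∧ ∀ a ∈ args, IsBaseTerm a

/-- A dependency tuple: a rule `s# → Com_n(t₁#,…,tₙ#)`. -/
def IsDT (r : Rule (SharpSym σ) V) : Prop :=
  IsSharpTerm r.lhs ∧
    ∃ (n : ℕ) (ts : List (Term (SharpSym σ) V)),
      r.rhs = Term.fn (SharpSym.com n) ts ∧ ts.length = n ∧ ∀ t ∈ ts, IsSharpTerm t

/-! ## Argument normal forms -/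

/-- Argument normal form: a variable, or a term all of whose direct arguments
are normal forms. -/
def ArgNF (R : Set (Rule σ V)) (t : Term σ V) : Prop :=
  (∃ x, t = Term.var x) ∨ ∃ f ts, t = Term.fn f ts ∧ ∀ u ∈ ts, NormalForm R u

/-- A parallel-innermost step all of whose rewrites are at positions strictly
below the root. -/
def ParInnermostBelow (R : Set (Rule σ V)) (s t : Term σ V) : Prop :=
  ParInnermost R s t ∧ ¬ IsInnermostRedex R s

/-- `b` is a maximal parallel argument normal form of `u`. -/
noncomputable def MaxANF (R : Set (Rule σ V)) (u b : Term σ V) : Prop :=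
  ArgNF R b ∧ Relation.ReflTransGen (ParInnermostBelow R) u b ∧
    ∀ u', ArgNF R u' → Relation.ReflTransGen (ParInnermostBelow R) u u' →
      Dh (ParInnermost R) u' ≤ Dh (ParInnermost R) b

/-! ## Many-sorted type assignments -/

/-- Well-typedness of a term wrt a sort set `St`, a type assignment `arty`
(argument sorts and result sort for each symbol) and variable typing `vty`. -/
inductive WellTyped {τ : Type} (St : Type) (arty : τ → List St × St) (vty : V → St) :
    Term τ V → St → Prop
  | var (x : V) : WellTyped St arty vty (Term.var x) (vty x)
  | fn (f : τ) (ts : List (Term τ V)) :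
      ts.length = (arty f).1.length →
      (∀ p ∈ ts.zip (arty f).1, WellTyped St arty vty p.1 p.2) →
      WellTyped St arty vty (Term.fn f ts) (arty f).2

/-- A strict total order on positions extending the strict prefix order. -/
def TotalExtOfPrefix (gt' : List ℕ → List ℕ → Prop) : Prop :=
  (∀ π τ, PosGT π τ → gt' π τ) ∧
  (∀ π τ ρ, gt' π τ → gt' τ ρ → gt' π ρ) ∧
  (∀ π τ, gt' π τ → ¬ gt' τ π) ∧
  (∀ π τ, π ≠ τ → gt' π τ ∨ gt' τ π)

/-!
A `(D,R)`-chain tree is replayed as an innermost `S/((D∖S) ∪ R)` derivation from `t#`. A node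
`(s# → Com_m(v₁#,…,vₘ#) | μ)` becomes a root step with its DT, which is a relative (counted)
step exactly when the DT lies in `S`; the edge to the `i`-th child becomes the `R`-steps from
`vᵢ#μ`, performed below the sharp root of the `i`-th argument of `Com_m`. A finite prefix-closed
set of nodes is replayed by peeling off one child subtree at a time, so every finite set of
`S`-nodes yields a derivation with at least as many relative steps.

These steps have to be innermost for the whole system `S ∪ (D∖S) ∪ R`, but the substitutions of
a chain tree may put sharp symbols, i.e. redexes of dependency tuples, below the root. Hence
every substitution is first composed with an injective renaming of sharp and compound symbols
into compound symbols (`SharpSym.hide`). The renaming fixes `t#` and neither creates nor destroys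
`R`-redexes, so normal forms and innermost `R`-steps survive it.
-/

open Relation

section Terms
variable {τ τ' : Type}

@[induction_eliminator]
theorem Term.induction {motive : Term τ V → Prop} (var : ∀ x, motive (Term.var x))
    (fn : ∀ f ts, (∀ t ∈ ts, motive t) → motive (Term.fn f ts)) (t : Term τ V) :
    motive t :=
  Term.rec (motive_2 := fun ts => ∀ t ∈ ts, motive t) var fn
    (fun _ h => absurd h List.not_mem_nil)
    (fun _ _ ht hts _ h => (List.mem_cons.1 h).elim (· ▸ ht) (hts _)) t

theorem List.eq_map_of_map_eq_map {α β γ : Type*} {f : α → γ} {g : β → γ}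
    {h : β → α} :
    ∀ {as : List α} {bs : List β}, as.map f = bs.map g →
      (∀ b ∈ bs, ∀ a, f a = g b → a = h b) → as = bs.map h
  | [], [], _, _ => rfl
  | a :: as, b :: bs, hmap, H => by
    simp only [List.map_cons, List.cons.injEq] at hmap
    rw [List.map_cons, H b List.mem_cons_self a hmap.1,
      List.eq_map_of_map_eq_map hmap.2 fun b' hb' => H b' (List.mem_cons_of_mem b hb')]

theorem Term.substList_eq_map (θ : V → Term τ V) (ts : List (Term τ V)) :
    Term.substList θ ts = ts.map (Term.subst θ) := by
  induction ts with
  | nil => rfl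
  | cons t ts ih => rw [Term.substList, ih, List.map_cons]

theorem Term.subst_fn (θ : V → Term τ V) (f : τ) (ts : List (Term τ V)) :
    (Term.fn f ts).subst θ = Term.fn f (ts.map (Term.subst θ)) := by
  rw [Term.subst, Term.substList_eq_map]

theorem Term.sizeList_eq_sum (ts : List (Term τ V)) :
    Term.sizeList ts = (ts.map Term.size).sum := by
  induction ts with
  | nil => rfl
  | cons t ts ih => rw [Term.sizeList, ih, List.map_cons, List.sum_cons]

theorem Term.size_fn (f : τ) (ts : List (Term τ V)) :
    (Term.fn f ts).size = 1 + (ts.map Term.size).sum := by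
  rw [Term.size, Term.sizeList_eq_sum]

mutual
def Term.map (g : τ → τ') : Term τ V → Term τ' V
  | Term.var x => Term.var x
  | Term.fn f ts => Term.fn (g f) (Term.mapList g ts)
def Term.mapList (g : τ → τ') : List (Term τ V) → List (Term τ' V)
  | [] => []
  | t :: ts => Term.map g t :: Term.mapList g ts
end

theorem Term.mapList_eq_map (g : τ → τ') (ts : List (Term τ V)) :
    Term.mapList g ts = ts.map (Term.map g) := by
  induction ts with
  | nil => rfl
  | cons t ts ih => rw [Term.mapList, ih, List.map_cons]

@[simp]
theorem Term.map_var (g : τ → τ') (x : V) : (Term.var x : Term τ V).map g = Term.var x := rfl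

@[simp]
theorem Term.map_fn (g : τ → τ') (f : τ) (ts : List (Term τ V)) :
    (Term.fn f ts).map g = Term.fn (g f) (ts.map (Term.map g)) := by
  rw [Term.map, Term.mapList_eq_map]

theorem Term.map_map {τ'' : Type} (g : τ → τ') (g' : τ' → τ'') (t : Term τ V) :
    (t.map g).map g' = t.map (g' ∘ g) := by
  induction t with
  | var x => rfl
  | fn f ts ih => simpa using List.map_congr_left ih

theorem Term.size_map (g : τ → τ') (t : Term τ V) : (t.map g).size = t.size := by
  induction t with
  | var x => rfl
  | fn f ts ih =>
    simp only [Term.map_fn, Term.size_fn, List.map_map]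
    exact congrArg (1 + List.sum ·) (List.map_congr_left ih)

theorem Term.map_subst (g : τ → τ') (θ : V → Term τ V) (t : Term τ V) :
    (t.subst θ).map g = (t.map g).subst (Term.map g ∘ θ) := by
  induction t with
  | var x => rfl
  | fn f ts ih => simpa [Term.subst_fn] using List.map_congr_left ih

theorem Term.map_injective {g : τ → τ'} (hg : g.Injective) :
    (Term.map g : Term τ V → Term τ' V).Injective := by
  intro t₁
  induction t₁ with
  | var x => intro t₂ h; cases t₂ <;> simp_all
  | fn f ts ih =>
    intro t₂ h
    cases t₂ with
    | var y => simp at h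
    | fn f' ts' =>
      simp only [Term.map_fn, Term.fn.injEq] at h
      obtain ⟨hf, hts⟩ := h
      rw [hg hf, List.eq_map_of_map_eq_map hts.symm fun t ht t' h => (ih t ht h.symm).symm,
        List.map_id']

theorem Term.embedList_eq_map (ts : List (Term σ V)) : Term.embedList ts = ts.map Term.embed := by
  induction ts with
  | nil => rfl
  | cons t ts ih => rw [Term.embedList, ih, List.map_cons]

theorem Term.embed_eq_map (t : Term σ V) : t.embed = t.map SharpSym.base := by
  induction t with
  | var x => rfl
  | fn f ts ih =>
    rw [Term.embed, Term.embedList_eq_map, Term.map_fn]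
    exact congrArg _ (List.map_congr_left ih)

end Terms

section Positions
variable {τ τ' : Type}

@[simp]
theorem Term.subtermAt_nil (t : Term τ V) : t.subtermAt [] = some t := by
  cases t <;> rfl

@[simp]
theorem Term.replaceAt_nil (t s : Term τ V) : t.replaceAt [] s = some s := by
  cases t <;> rfl

theorem Term.subtermAt_fn_cons (f : τ) (ts : List (Term τ V)) (i : ℕ) (π : List ℕ) :
    (Term.fn f ts).subtermAt (i :: π) = ts[i]?.bind (·.subtermAt π) := by
  cases h : ts[i]? <;> simp [Term.subtermAt, h]

theorem Term.replaceAt_fn_cons (f : τ) (ts : List (Term τ V)) (i : ℕ) (π : List ℕ)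
    (s : Term τ V) :
    (Term.fn f ts).replaceAt (i :: π) s =
      ts[i]?.bind fun u => (u.replaceAt π s).map fun u' => Term.fn f (ts.set i u') := by
  cases h : ts[i]? with
  | none => simp [Term.replaceAt, h]
  | some u => cases h' : u.replaceAt π s <;> simp [Term.replaceAt, h, h']

theorem Term.subtermAt_map (g : τ → τ') :
    ∀ (t : Term τ V) (π : List ℕ), (t.map g).subtermAt π = (t.subtermAt π).map (Term.map g)
  | t, [] => by simp
  | Term.var x, i :: π => rfl
  | Term.fn f ts, i :: π => by
    rw [Term.map_fn, Term.subtermAt_fn_cons, Term.subtermAt_fn_cons, List.getElem?_map]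
    cases ts[i]? with
    | none => rfl
    | some u => exact Term.subtermAt_map g u π

theorem Term.replaceAt_map (g : τ → τ') :
    ∀ (t : Term τ V) (π : List ℕ) (s : Term τ V),
      (t.map g).replaceAt π (s.map g) = (t.replaceAt π s).map (Term.map g)
  | t, [], s => by simp
  | Term.var x, i :: π, s => rfl
  | Term.fn f ts, i :: π, s => by
    rw [Term.map_fn, Term.replaceAt_fn_cons, Term.replaceAt_fn_cons, List.getElem?_map]
    cases ts[i]? with
    | none => rfl
    | some u =>
      simp only [Option.map_some, Option.bind_some, Term.replaceAt_map g u π s,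
        Option.map_map]
      congr 1
      funext u'
      simp [List.map_set]

theorem Term.exists_replaceAt_of_subtermAt :
    ∀ {t u : Term τ V} (π : List ℕ), t.subtermAt π = some u →
      ∀ s, ∃ t', t.replaceAt π s = some t'
  | t, _, [], _, s => ⟨s, Term.replaceAt_nil t s⟩
  | Term.var x, _, i :: π, h, s => nomatch h
  | Term.fn f ts, _, i :: π, h, s => by
    rw [Term.subtermAt_fn_cons] at h
    obtain ⟨w, hw, hπ⟩ := Option.bind_eq_some_iff.1 h
    obtain ⟨w', hw'⟩ := Term.exists_replaceAt_of_subtermAt π hπ s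
    exact ⟨_, by rw [Term.replaceAt_fn_cons, hw, Option.bind_some, hw', Option.map_some]⟩

end Positions

theorem Set.mem_union_diff_union {α : Type*} {S D X : Set α} {a : α} (ha : a ∈ D) :
    a ∈ S ∪ ((D \ S) ∪ X) := by
  by_cases haS : a ∈ S
  exacts [.inl haS, .inr (.inl ⟨ha, haS⟩)]

theorem iterRel_add {α : Type} {r : α → α → Prop} {a b : ℕ} {s m u : α}
    (h₁ : iterRel r a s m) (h₂ : iterRel r b m u) : iterRel r (a + b) s u := by
  induction a generalizing s with
  | zero => cases h₁; simpa using h₂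
  | succ a ih =>
    obtain ⟨w, hw, h₁⟩ := h₁
    rw [Nat.succ_add]
    exact ⟨w, hw, ih h₁⟩

theorem natCast_le_Dh_of_iterRel {α : Type} {r : α → α → Prop} {n : ℕ} {s t : α}
    (h : iterRel r n s t) :
    (n : ℕ∞) ≤ Dh r s :=
  le_sSup ⟨n, rfl, t, h⟩

theorem List.getElem?_set_of_getElem? {α : Type*} {l : List α} {i : ℕ} {a : α} (b : α)
    (h : l[i]? = some a) : (l.set i b)[i]? = some b :=
  List.getElem?_set_self (List.getElem?_eq_some_iff.1 h).1

section Rewriting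
variable {τ : Type} {W X A B : Set (Rule τ V)}

theorem InnermostRewriteSub.root {r : Rule τ V} (hr : r ∈ X) {θ : V → Term τ V}
    (h : IsInnermostRedex W (r.lhs.subst θ)) :
    InnermostRewriteSub W X (r.lhs.subst θ) (r.rhs.subst θ) :=
  ⟨[], r, hr, θ, Term.subtermAt_nil _, h, Term.replaceAt_nil _ _⟩

theorem InnermostRewriteSub.exists_arg {f : τ} {ts : List (Term τ V)} {t : Term τ V}
    (h : InnermostRewriteSub W X (Term.fn f ts) t) (hroot : ¬ IsRedex X (Term.fn f ts)) :
    ∃ i u u', ts[i]? = some u ∧ InnermostRewriteSub W X u u' ∧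
      t = Term.fn f (ts.set i u') := by
  obtain ⟨π, r, hr, θ, hsub, hin, hrep⟩ := h
  cases π with
  | nil => exact absurd ⟨r, hr, θ, by simpa using hsub⟩ hroot
  | cons i π =>
    rw [Term.subtermAt_fn_cons] at hsub
    obtain ⟨u, hu, hsub⟩ := Option.bind_eq_some_iff.1 hsub
    rw [Term.replaceAt_fn_cons, hu, Option.bind_some] at hrep
    simp only [Option.map_eq_some_iff] at hrep
    obtain ⟨u', hrep, rfl⟩ := hrep
    exact ⟨i, u, u', hu, ⟨π, r, hr, θ, hsub, hin, hrep⟩, rfl⟩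

theorem NormalForm.not_isRedex_of_subtermAt {t u : Term τ V} {π : List ℕ}
    (ht : NormalForm X t) (hu : t.subtermAt π = some u) : ¬ IsRedex X u := by
  rintro ⟨r, hr, θ, rfl⟩
  obtain ⟨t', ht'⟩ := Term.exists_replaceAt_of_subtermAt π hu (r.rhs.subst θ)
  exact ht ⟨t', π, r, hr, θ, hu, ht'⟩

def ClosedUnderArgs (r : Term τ V → Term τ V → Prop) : Prop :=
  ∀ ⦃f : τ⦄ ⦃ts : List (Term τ V)⦄ ⦃i : ℕ⦄ ⦃u u' : Term τ V⦄,
    ts[i]? = some u → r u u' → r (Term.fn f ts) (Term.fn f (ts.set i u'))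

theorem closedUnderArgs_innermostRewriteSub : ClosedUnderArgs (InnermostRewriteSub W X) := by
  rintro f ts i u u' hu ⟨π, r, hr, θ, hsub, hin, hrep⟩
  refine ⟨i :: π, r, hr, θ, ?_, hin, ?_⟩
  · rw [Term.subtermAt_fn_cons, hu, Option.bind_some, hsub]
  · rw [Term.replaceAt_fn_cons, hu, Option.bind_some, hrep, Option.map_some]

theorem ClosedUnderArgs.reflTransGen {r : Term τ V → Term τ V → Prop}
    (h : ClosedUnderArgs r) :
    ClosedUnderArgs (ReflTransGen r) := by
  intro f ts i u u' hu huu'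
  induction huu' with
  | refl =>
    obtain ⟨hi, rfl⟩ := List.getElem?_eq_some_iff.1 hu
    rw [List.set_getElem_self]
  | tail _ hstep ih =>
    simpa only [List.set_set] using ih.tail (h (List.getElem?_set_of_getElem? _ hu) hstep)

theorem ClosedUnderArgs.iterRel {r : Term τ V → Term τ V → Prop} (h : ClosedUnderArgs r)
    (n : ℕ) : ClosedUnderArgs (iterRel r n) := by
  induction n with
  | zero =>
    rintro f ts i u u' hu rfl
    obtain ⟨hi, rfl⟩ := List.getElem?_eq_some_iff.1 hu
    exact (congrArg _ (List.set_getElem_self hi)).symm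
  | succ n ih =>
    rintro f ts i u u' hu ⟨w, hw, hrest⟩
    refine ⟨_, h hu hw, ?_⟩
    simpa only [List.set_set] using ih (List.getElem?_set_of_getElem? _ hu) hrest

theorem closedUnderArgs_relInnermost : ClosedUnderArgs (RelInnermost A B) := by
  rintro f ts i u u' hu ⟨s', s'', h₁, h₂, h₃⟩
  have hB : ClosedUnderArgs (ReflTransGen (InnermostRewriteSub (A ∪ B) B)) :=
    closedUnderArgs_innermostRewriteSub.reflTransGen
  have h₂' :=
    closedUnderArgs_innermostRewriteSub (f := f) (List.getElem?_set_of_getElem? _ hu) h₂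
  have h₃' := hB (f := f) (List.getElem?_set_of_getElem? s'' hu) h₃
  rw [List.set_set] at h₂' h₃'
  exact ⟨_, _, hB hu h₁, h₂', h₃'⟩

def RelSteps (A B : Set (Rule τ V)) (c : ℕ) (s t : Term τ V) : Prop :=
  ∃ m, ReflTransGen (InnermostRewriteSub (A ∪ B) B) s m ∧ iterRel (RelInnermost A B) c m t

theorem iterRel_relInnermost_tail {c : ℕ} {m t u : Term τ V}
    (h : iterRel (RelInnermost A B) (c + 1) m t)
    (h' : ReflTransGen (InnermostRewriteSub (A ∪ B) B) t u) :
    iterRel (RelInnermost A B) (c + 1) m u := by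
  induction c generalizing m with
  | zero =>
    obtain ⟨w, ⟨a, b, h₁, h₂, h₃⟩, rfl⟩ := h
    exact ⟨u, ⟨a, b, h₁, h₂, h₃.trans h'⟩, rfl⟩
  | succ c ih =>
    obtain ⟨w, hw, hrest⟩ := h
    exact ⟨w, hw, ih hrest⟩

namespace RelSteps
variable {c d : ℕ} {s t u : Term τ V}

theorem of_reflTransGen (h : ReflTransGen (InnermostRewriteSub (A ∪ B) B) s t) :
    RelSteps A B 0 s t :=
  ⟨t, h, rfl⟩

theorem single (h : InnermostRewriteSub (A ∪ B) A s t) : RelSteps A B 1 s t :=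
  ⟨s, .refl, t, ⟨s, t, .refl, h, .refl⟩, rfl⟩

theorem tail (h : RelSteps A B c s t) (h' : ReflTransGen (InnermostRewriteSub (A ∪ B) B) t u) :
    RelSteps A B c s u := by
  obtain ⟨m, hm, hit⟩ := h
  cases c with
  | zero => cases hit; exact ⟨u, hm.trans h', rfl⟩
  | succ c => exact ⟨m, hm, iterRel_relInnermost_tail hit h'⟩

theorem trans (h₁ : RelSteps A B c s t) (h₂ : RelSteps A B d t u) :
    RelSteps A B (c + d) s u := by
  obtain ⟨m₂, hm₂, hit₂⟩ := h₂
  obtain ⟨m₁, hm₁, hit₁⟩ := h₁.tail hm₂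
  exact ⟨m₁, hm₁, iterRel_add hit₁ hit₂⟩

theorem natCast_le_Dh (h : RelSteps A B c s t) : (c : ℕ∞) ≤ Dh (RelInnermost A B) s := by
  obtain ⟨m, hm, hit⟩ := h
  cases c with
  | zero => exact zero_le
  | succ c =>
    obtain ⟨w, ⟨a, b, h₁, h₂, h₃⟩, hrest⟩ := hit
    exact natCast_le_Dh_of_iterRel ⟨w, ⟨a, b, hm.trans h₁, h₂, h₃⟩, hrest⟩

end RelSteps

theorem closedUnderArgs_relSteps (c : ℕ) : ClosedUnderArgs (RelSteps A B c) := by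
  rintro f ts i u u' hu ⟨m, hm, hit⟩
  refine ⟨_, closedUnderArgs_innermostRewriteSub.reflTransGen hu hm, ?_⟩
  simpa only [List.set_set] using
    closedUnderArgs_relInnermost.iterRel c (List.getElem?_set_of_getElem? _ hu) hit

theorem RelSteps.trans_arg {c d : ℕ} {f : τ} {ws : List (Term τ V)} {i : ℕ}
    {s a b b' : Term τ V} (h₁ : RelSteps A B c s (Term.fn f ws)) (hi : ws[i]? = some a)
    (h : ReflTransGen (InnermostRewriteSub (A ∪ B) B) a b) (h₂ : RelSteps A B d b b') :
    RelSteps A B (c + d) s (Term.fn f (ws.set i b')) := by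
  have h₂' := closedUnderArgs_relSteps d (f := f) (List.getElem?_set_of_getElem? b hi) h₂
  rw [List.set_set] at h₂'
  exact (h₁.tail (closedUnderArgs_innermostRewriteSub.reflTransGen hi h)).trans h₂'

end Rewriting

section Hiding

theorem Term.exists_subst_of_map_eq {τ τ' : Type} {g : τ → τ'} (hg : g.Injective)
    {θ : V → Term τ' V} {w l : Term τ V} (h : w.map g = (l.map g).subst θ) :
    ∃ θ', w = l.subst θ' := by
  classical
  -- injectivity of `Term.map g` makes the chosen preimages agree on repeated variables of `l`
  refine ⟨fun x => if hx : ∃ w' : Term τ V, w'.map g = θ x then hx.choose else Term.var x,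
    ?_⟩
  induction l generalizing w with
  | var x =>
    have hx : ∃ w' : Term τ V, w'.map g = θ x := ⟨w, h⟩
    simpa [Term.subst, hx] using Term.map_injective hg (hx.choose_spec.trans h.symm) |>.symm
  | fn f ls ih =>
    cases w with
    | var y => simp [Term.subst_fn] at h
    | fn s ts =>
      simp only [Term.map_fn, Term.subst_fn, List.map_map, Term.fn.injEq] at h
      rw [hg h.1, Term.subst_fn]
      exact congrArg _ (List.eq_map_of_map_eq_map h.2 fun l hl w hw => ih l hl hw)

theorem IsRedex.of_map {τ : Type} {g : τ → τ} (hg : g.Injective) {X : Set (Rule τ V)}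
    (hX : ∀ r ∈ X, r.lhs.map g = r.lhs) {w : Term τ V} (h : IsRedex X (w.map g)) :
    IsRedex X w := by
  obtain ⟨r, hr, θ, hw⟩ := h
  rw [← hX r hr] at hw
  obtain ⟨θ', rfl⟩ := Term.exists_subst_of_map_eq hg hw
  exact ⟨r, hr, θ', rfl⟩

def SharpSym.hide (e : σ → ℕ) : SharpSym σ → SharpSym σ
  | SharpSym.base f => SharpSym.base f
  | SharpSym.sharp f => SharpSym.com (2 * e f + 1)
  | SharpSym.com k => SharpSym.com (2 * k + 2)

variable {e : σ → ℕ}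

theorem SharpSym.hide_injective (he : e.Injective) : (SharpSym.hide e).Injective := by
  intro a b h
  cases a <;> cases b <;> simp [SharpSym.hide] at h ⊢ <;> first | exact h | exact he h | omega

theorem SharpSym.hide_ne_sharp (s : SharpSym σ) (f : σ) : s.hide e ≠ SharpSym.sharp f := by
  cases s <;> simp [SharpSym.hide]

theorem Term.map_hide_embed (t : Term σ V) : t.embed.map (SharpSym.hide e) = t.embed := by
  rw [Term.embed_eq_map, Term.map_map]
  rfl

theorem IsBaseTerm.map_hide {b : Term (SharpSym σ) V} (hb : IsBaseTerm b) :
    b.map (SharpSym.hide e) = b := by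
  induction hb with
  | var x => rfl
  | fn f ts _ ih => simpa [SharpSym.hide] using List.map_congr_left ih

def Term.hideArgs (e : σ → ℕ) : Term (SharpSym σ) V → Term (SharpSym σ) V
  | Term.var x => Term.var x
  | Term.fn s ts => Term.fn s (ts.map (Term.map (SharpSym.hide e)))

theorem IsSharpTerm.subst_map_hide {v : Term (SharpSym σ) V} (hv : IsSharpTerm v)
    (ν : V → Term (SharpSym σ) V) :
    v.subst (Term.map (SharpSym.hide e) ∘ ν) = (v.subst ν).hideArgs e := by
  obtain ⟨f, args, rfl, hargs⟩ := hv
  simp only [Term.subst_fn, Term.hideArgs, List.map_map]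
  refine congrArg _ (List.map_congr_left fun a ha => ?_)
  simp [Term.map_subst, (hargs a ha).map_hide]

theorem Term.hideArgs_sharp (R : Set (Rule σ V)) (t : Term σ V) :
    (t.sharp R).hideArgs e = t.sharp R := by
  cases t with
  | var x => rfl
  | fn f ts =>
    rw [Term.sharp]
    split_ifs <;>
    · rw [Term.hideArgs, Term.embedList_eq_map, List.map_map]
      exact congrArg _ (List.map_congr_left fun t _ => Term.map_hide_embed t)

theorem Term.subtermAt_hideArgs_cons (t : Term (SharpSym σ) V) (i : ℕ) (π : List ℕ) :
    (t.hideArgs e).subtermAt (i :: π) =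
      (t.subtermAt (i :: π)).map (Term.map (SharpSym.hide e)) := by
  cases t with
  | var x => rfl
  | fn s ts =>
    rw [Term.hideArgs, Term.subtermAt_fn_cons, Term.subtermAt_fn_cons, List.getElem?_map]
    cases ts[i]? with
    | none => rfl
    | some u => exact Term.subtermAt_map _ u π

end Hiding

section DependencyTuples
variable {D S : Set (Rule (SharpSym σ) V)} {R : Set (Rule σ V)} {e : σ → ℕ}

theorem not_isRedex_liftRules_sharp (hR : IsWfTRS R) (f : σ) (ts : List (Term (SharpSym σ) V)) :
    ¬ IsRedex (liftRules R) (Term.fn (SharpSym.sharp f) ts) := by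
  rintro ⟨_, ⟨ρ, hρ, rfl⟩, θ, h⟩
  cases hl : ρ.lhs with
  | var x => exact hR.2.1 ρ hρ ⟨x, hl⟩
  | fn g ls => simp [liftRule, hl, Term.embed, Term.subst] at h

theorem mem_or_mem_liftRules_of_mem_union (hS : S ⊆ D) {r : Rule (SharpSym σ) V}
    (hr : r ∈ S ∪ ((D \ S) ∪ liftRules R)) : r ∈ D ∨ r ∈ liftRules R := by
  rcases hr with hr | ⟨hr, -⟩ | hr
  exacts [.inl (hS hr), .inl hr, .inr hr]

theorem sharpRooted_or_isRedex_liftRules (hD : ∀ d ∈ D, IsDT d) (hS : S ⊆ D)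
    {u : Term (SharpSym σ) V}
    (h : IsRedex (S ∪ ((D \ S) ∪ liftRules R)) u) :
    (∃ f ts, u = Term.fn (SharpSym.sharp f) ts) ∨ IsRedex (liftRules R) u := by
  obtain ⟨r, hr, θ, rfl⟩ := h
  rcases mem_or_mem_liftRules_of_mem_union hS hr with hr | hr
  · obtain ⟨f, args, hl, -⟩ := (hD r hr).1
    exact .inl ⟨f, _, by rw [hl, Term.subst_fn]⟩
  · exact .inr ⟨r, hr, θ, rfl⟩

theorem Term.subst_embed_map_hide (t : Term σ V) (θ : V → Term (SharpSym σ) V) :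
    t.embed.subst (Term.map (SharpSym.hide e) ∘ θ) =
      (t.embed.subst θ).map (SharpSym.hide e) := by
  rw [Term.map_subst, Term.map_hide_embed]

theorem not_isRedex_map_hide (he : e.Injective) (hD : ∀ d ∈ D, IsDT d) (hS : S ⊆ D)
    {u : Term (SharpSym σ) V} (hu : ¬ IsRedex (liftRules R) u) :
    ¬ IsRedex (S ∪ ((D \ S) ∪ liftRules R)) (u.map (SharpSym.hide e)) := by
  intro h
  rcases sharpRooted_or_isRedex_liftRules hD hS h with ⟨f, ts, hf⟩ | h
  · cases u with
    | var x => cases hf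
    | fn s us => exact SharpSym.hide_ne_sharp s f (Term.fn.inj hf).1
  · refine hu (h.of_map (SharpSym.hide_injective he) ?_)
    rintro _ ⟨ρ, -, rfl⟩
    exact Term.map_hide_embed ρ.lhs

theorem innermostRewriteSub_map_hide (he : e.Injective) (hD : ∀ d ∈ D, IsDT d) (hS : S ⊆ D)
    {u u' : Term (SharpSym σ) V} (h : InnermostRewrite (liftRules R) u u') :
    InnermostRewriteSub (S ∪ ((D \ S) ∪ liftRules R)) ((D \ S) ∪ liftRules R)
      (u.map (SharpSym.hide e)) (u'.map (SharpSym.hide e)) := by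
  obtain ⟨π, _, ⟨ρ, hρ, rfl⟩, θ, hsub, ⟨-, hinner⟩, hrep⟩ := h
  have hρ' : liftRule ρ ∈ liftRules R := ⟨ρ, hρ, rfl⟩
  refine ⟨π, liftRule ρ, .inr hρ', Term.map (SharpSym.hide e) ∘ θ, ?_,
    ⟨⟨liftRule ρ, .inr (.inr hρ'), _, rfl⟩, fun q hq w hw => ?_⟩, ?_⟩
  · rw [Term.subtermAt_map, hsub, Option.map_some]
    exact congrArg some (Term.subst_embed_map_hide ρ.lhs θ).symm
  · rw [liftRule, Term.subst_embed_map_hide, Term.subtermAt_map] at hw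
    obtain ⟨w', hw', rfl⟩ := Option.map_eq_some_iff.1 hw
    exact not_isRedex_map_hide he hD hS (hinner q hq w' hw')
  · rw [liftRule, Term.subst_embed_map_hide, Term.replaceAt_map]
    exact congrArg (Option.map _) hrep

theorem reflTransGen_hideArgs (he : e.Injective) (hD : ∀ d ∈ D, IsDT d) (hS : S ⊆ D)
    (hR : IsWfTRS R) {f : σ} {ts : List (Term (SharpSym σ) V)} {b : Term (SharpSym σ) V}
    (h : ReflTransGen (InnermostRewrite (liftRules R)) (Term.fn (SharpSym.sharp f) ts) b) :
    ReflTransGen (InnermostRewriteSub (S ∪ ((D \ S) ∪ liftRules R)) ((D \ S) ∪ liftRules R))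
      ((Term.fn (SharpSym.sharp f) ts).hideArgs e) (b.hideArgs e) := by
  suffices (∃ ts', b = Term.fn (SharpSym.sharp f) ts') ∧
      ReflTransGen (InnermostRewriteSub (S ∪ ((D \ S) ∪ liftRules R)) ((D \ S) ∪ liftRules R))
        ((Term.fn (SharpSym.sharp f) ts).hideArgs e) (b.hideArgs e) from this.2
  induction h with
  | refl => exact ⟨⟨ts, rfl⟩, .refl⟩
  | tail _ hstep ih =>
    obtain ⟨⟨ts', rfl⟩, hrtg⟩ := ih
    obtain ⟨i, u, u', hu, harg, rfl⟩ :=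
      InnermostRewriteSub.exists_arg hstep (not_isRedex_liftRules_sharp hR f ts')
    refine ⟨⟨_, rfl⟩, hrtg.tail ?_⟩
    rw [Term.hideArgs, Term.hideArgs, List.map_set]
    exact closedUnderArgs_innermostRewriteSub (by rw [List.getElem?_map, hu]; rfl)
      (innermostRewriteSub_map_hide he hD hS harg)

theorem isInnermostRedex_subst_map_hide (he : e.Injective) (hD : ∀ d ∈ D, IsDT d) (hS : S ⊆ D)
    {r : Rule (SharpSym σ) V} (hr : r ∈ D) {ν : V → Term (SharpSym σ) V}
    (hNF : NormalForm (liftRules R) (r.lhs.subst ν)) :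
    IsInnermostRedex (S ∪ ((D \ S) ∪ liftRules R))
      (r.lhs.subst (Term.map (SharpSym.hide e) ∘ ν)) := by
  refine ⟨⟨r, Set.mem_union_diff_union hr, _, rfl⟩, fun π hπ w hw => ?_⟩
  obtain ⟨i, π, rfl⟩ := List.exists_cons_of_ne_nil hπ
  rw [(hD r hr).1.subst_map_hide, Term.subtermAt_hideArgs_cons] at hw
  obtain ⟨w', hw', rfl⟩ := Option.map_eq_some_iff.1 hw
  exact not_isRedex_map_hide he hD hS (hNF.not_isRedex_of_subtermAt hw')

end DependencyTuples

section Subtrees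
variable {S : Set (Rule (SharpSym σ) V)}

def IsSubtreeAt (p : List ℕ) (Q : Finset (List ℕ)) : Prop :=
  p ∈ Q ∧ ∀ q ∈ Q, p <+: q ∧ ∀ q', p <+: q' → q' <+: q → q' ∈ Q

namespace IsSubtreeAt
variable {p : List ℕ} {Q : Finset (List ℕ)}

theorem filter_not_prefix (hQ : IsSubtreeAt p Q) (h : ℕ) :
    IsSubtreeAt p (Q.filter fun q => ¬ p ++ [h] <+: q) := by
  refine ⟨Finset.mem_filter.2 ⟨hQ.1, fun hp => ?_⟩, fun q hq => ?_⟩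
  · simpa using hp.length_le
  · obtain ⟨hqQ, hq⟩ := Finset.mem_filter.1 hq
    refine ⟨(hQ.2 q hqQ).1, fun q' hpq' hq'q => Finset.mem_filter.2 ⟨?_, ?_⟩⟩
    exacts [(hQ.2 q hqQ).2 q' hpq' hq'q, fun hc => hq (hc.trans hq'q)]

theorem filter_prefix (hQ : IsSubtreeAt p Q) {c : List ℕ} (hc : c ∈ Q) :
    IsSubtreeAt c (Q.filter fun q => c <+: q) := by
  refine ⟨Finset.mem_filter.2 ⟨hc, List.prefix_refl c⟩, fun q hq => ?_⟩
  obtain ⟨hqQ, hcq⟩ := Finset.mem_filter.1 hq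
  exact ⟨hcq, fun q' hcq' hq'q => Finset.mem_filter.2
    ⟨(hQ.2 q hqQ).2 q' ((hQ.2 c hc).1.trans hcq') hq'q, hcq'⟩⟩

theorem eq_singleton (hQ : IsSubtreeAt p Q) (h : ∀ j, p ++ [j] ∉ Q) : Q = {p} := by
  refine Finset.eq_singleton_iff_unique_mem.2 ⟨hQ.1, fun q hq => ?_⟩
  obtain ⟨⟨_ | ⟨j, tl⟩, rfl⟩, hclosed⟩ := hQ.2 q hq
  · exact List.append_nil p
  · refine absurd (hclosed (p ++ [j]) (List.prefix_append p [j]) ?_) (h j)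
    exact ⟨tl, by simp⟩

end IsSubtreeAt

open Classical in
noncomputable def countS (T : ChainTree σ V) (S : Set (Rule (SharpSym σ) V))
    (Q : Finset (List ℕ)) : ℕ :=
  (Q.filter fun q => ∃ r ν, T.label q = some (r, ν) ∧ r ∈ S).card

theorem countS_filter_add (T : ChainTree σ V) (Q : Finset (List ℕ)) (P : List ℕ → Prop)
    [DecidablePred P] :
    countS T S (Q.filter fun q => ¬ P q) + countS T S (Q.filter P) = countS T S Q := by
  simp only [countS]
  rw [Finset.filter_comm, Finset.filter_comm P, add_comm]
  exact Finset.card_filter_add_card_filter_not _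

open Classical in
theorem countS_singleton {T : ChainTree σ V} {p : List ℕ} {r : Rule (SharpSym σ) V}
    {ν : V → Term (SharpSym σ) V} (hp : T.label p = some (r, ν)) :
    countS T S {p} = if r ∈ S then 1 else 0 := by
  simp only [countS, Finset.filter_singleton, hp, Option.some.injEq, Prod.mk.injEq]
  split_ifs <;> simp_all

end Subtrees

section Simulation
variable {D S : Set (Rule (SharpSym σ) V)} {R : Set (Rule σ V)} {e : σ → ℕ}
  {T : ChainTree σ V} {t : Term (SharpSym σ) V} {p : List ℕ} {r : Rule (SharpSym σ) V}
  {ν : V → Term (SharpSym σ) V}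

open Classical in
theorem relSteps_root (he : e.Injective) (hD : ∀ d ∈ D, IsDT d) (hS : S ⊆ D)
    (hT : IsChainTree D (liftRules R) T t) (hp : T.label p = some (r, ν)) :
    RelSteps S ((D \ S) ∪ liftRules R) (if r ∈ S then 1 else 0)
      (r.lhs.subst (Term.map (SharpSym.hide e) ∘ ν))
      (r.rhs.subst (Term.map (SharpSym.hide e) ∘ ν)) := by
  obtain ⟨hrD, hNF, -⟩ := hT.2.2 p r ν hp
  have hin := isInnermostRedex_subst_map_hide he hD hS hrD hNF
  split_ifs with hrS
  · exact .single (.root hrS hin)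
  · exact .of_reflTransGen (.single (.root (.inl ⟨hrD, hrS⟩) hin))

theorem reflTransGen_child (he : e.Injective) (hD : ∀ d ∈ D, IsDT d) (hS : S ⊆ D)
    (hR : IsWfTRS R) (hT : IsChainTree D (liftRules R) T t) (hp : T.label p = some (r, ν))
    {i : ℕ} {r' : Rule (SharpSym σ) V} {δ : V → Term (SharpSym σ) V}
    (hc : T.label (p ++ [i]) = some (r', δ)) {m : ℕ} {vs : List (Term (SharpSym σ) V)}
    (hrhs : r.rhs = Term.fn (SharpSym.com m) vs) :
    ∃ v, vs[i]? = some v ∧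
      ReflTransGen (InnermostRewriteSub (S ∪ ((D \ S) ∪ liftRules R)) ((D \ S) ∪ liftRules R))
        (v.subst (Term.map (SharpSym.hide e) ∘ ν))
        (r'.lhs.subst (Term.map (SharpSym.hide e) ∘ δ)) := by
  obtain ⟨hrD, -, hchild⟩ := hT.2.2 p r ν hp
  obtain ⟨m', vs', hrhs', v, hv, hchain⟩ := hchild i r' δ hc
  obtain rfl : vs' = vs := by rw [hrhs] at hrhs'; exact (Term.fn.inj hrhs').2.symm
  obtain ⟨-, m'', vs'', hrhs'', -, hvs⟩ := hD r hrD
  rw [hrhs, Term.fn.injEq] at hrhs''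
  have hsharp : IsSharpTerm v := hvs v (hrhs''.2 ▸ List.mem_of_getElem? hv)
  refine ⟨v, hv, ?_⟩
  rw [hsharp.subst_map_hide, (hD r' (hT.2.2 _ r' δ hc).1).1.subst_map_hide]
  obtain ⟨f, args, rfl, -⟩ := hsharp
  rw [Term.subst_fn] at hchain ⊢
  exact reflTransGen_hideArgs he hD hS hR hchain

theorem exists_relSteps_of_isSubtreeAt (he : e.Injective) (hD : ∀ d ∈ D, IsDT d) (hS : S ⊆ D)
    (hR : IsWfTRS R) (hT : IsChainTree D (liftRules R) T t) (Q : Finset (List ℕ)) :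
    ∀ {p}, IsSubtreeAt p Q → (∀ q ∈ Q, T.label q ≠ none) →
    ∀ {r ν}, T.label p = some (r, ν) → ∀ {m vs}, r.rhs = Term.fn (SharpSym.com m) vs →
    ∃ ws, RelSteps S ((D \ S) ∪ liftRules R) (countS T S Q)
        (r.lhs.subst (Term.map (SharpSym.hide e) ∘ ν)) (Term.fn (SharpSym.com m) ws) ∧
      ∀ j, p ++ [j] ∉ Q →
        ws[j]? = (vs.map (Term.subst (Term.map (SharpSym.hide e) ∘ ν)))[j]? := by
  induction Q using Finset.strongInduction with
  | H Q ih =>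
  intro p hQ hlab r ν hp m vs hrhs
  by_cases hchild : ∃ h, p ++ [h] ∈ Q
  · obtain ⟨h, hhQ⟩ := hchild
    obtain ⟨ws₁, hsteps₁, hws₁⟩ := ih (Q.filter fun q => ¬ p ++ [h] <+: q)
      (Finset.filter_ssubset.2 ⟨_, hhQ, not_not.2 (List.prefix_refl _)⟩)
      (hQ.filter_not_prefix h) (fun q hq => hlab q (Finset.mem_filter.1 hq).1) hp hrhs
    obtain ⟨⟨r', δ⟩, hc⟩ := Option.ne_none_iff_exists'.1 (hlab _ hhQ)
    obtain ⟨v, hv, hchain⟩ := reflTransGen_child he hD hS hR hT hp hc hrhs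
    obtain ⟨-, m', vs', hrhs', -⟩ := hD r' (hT.2.2 _ r' δ hc).1
    obtain ⟨ws₂, hsteps₂, -⟩ := ih (Q.filter fun q => p ++ [h] <+: q)
      (Finset.filter_ssubset.2 ⟨p, hQ.1, fun hp' => by simpa using hp'.length_le⟩)
      (hQ.filter_prefix hhQ) (fun q hq => hlab q (Finset.mem_filter.1 hq).1) hc hrhs'
    have hws₁h : ws₁[h]? = some (v.subst (Term.map (SharpSym.hide e) ∘ ν)) := by
      rw [hws₁ h (fun h' => (Finset.mem_filter.1 h').2 (List.prefix_refl _)), List.getElem?_map,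
        hv, Option.map_some]
    refine ⟨ws₁.set h (Term.fn (SharpSym.com m') ws₂), ?_, fun j hj => ?_⟩
    · rw [← countS_filter_add T Q (fun q => p ++ [h] <+: q)]
      exact hsteps₁.trans_arg hws₁h hchain hsteps₂
    · rw [List.getElem?_set_ne fun hjh : h = j => hj (hjh ▸ hhQ)]
      exact hws₁ j fun hj' => hj (Finset.mem_filter.1 hj').1
  · rw [not_exists] at hchild
    rw [hQ.eq_singleton hchild, countS_singleton hp]
    refine ⟨vs.map (Term.subst (Term.map (SharpSym.hide e) ∘ ν)), ?_, fun j _ => rfl⟩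
    simpa only [hrhs, Term.subst_fn] using relSteps_root he hD hS hT hp

end Simulation

theorem Set.exists_finset_subset_card_eq {α : Type*} {s : Set α} {k : ℕ}
    (hk : (k : ℕ∞) ≤ s.encard) :
    ∃ P : Finset α, ↑P ⊆ s ∧ P.card = k := by
  obtain ⟨t, hts, htk⟩ := Set.exists_subset_encard_eq hk
  have ht : t.Finite := Set.finite_of_encard_eq_coe htk
  refine ⟨ht.toFinset, by simpa using hts, ?_⟩
  rw [ht.encard_eq_coe_toFinset_card, Nat.cast_inj] at htk
  exact htk

section Assembly
variable {D S : Set (Rule (SharpSym σ) V)} {R : Set (Rule σ V)} {e : σ → ℕ}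
  {T : ChainTree σ V} {t : Term (SharpSym σ) V}

theorem IsChainTree.label_ne_none_of_prefix {X : Set (Rule (SharpSym σ) V)}
    (hT : IsChainTree D X T t) {p q : List ℕ} (hpq : p <+: q) (hq : T.label q ≠ none) :
    T.label p ≠ none := by
  obtain ⟨tl, rfl⟩ := hpq
  induction tl using List.reverseRecOn with
  | nil => simpa using hq
  | append_singleton tl i ih => exact ih (hT.2.1 _ i (by rwa [← List.append_assoc] at hq))

theorem IsChainTree.exists_isSubtreeAt_nil_superset {X : Set (Rule (SharpSym σ) V)}
    (hT : IsChainTree D X T t) (P : Finset (List ℕ)) (hP : ∀ q ∈ P, T.label q ≠ none) :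
    ∃ Q, P ⊆ Q ∧ IsSubtreeAt [] Q ∧ ∀ q ∈ Q, T.label q ≠ none := by
  have hroot : T.label [] ≠ none := by
    obtain ⟨r, ν, h, -⟩ := hT.1
    simp [h]
  set Q := (insert [] P).biUnion fun q => q.inits.toFinset
  have hmem : ∀ q, q ∈ Q ↔ ∃ q₀, (q₀ = [] ∨ q₀ ∈ P) ∧ q <+: q₀ := by simp [Q]
  refine ⟨Q, fun q hq => (hmem q).2 ⟨q, .inr hq, List.prefix_refl q⟩,
    ⟨(hmem []).2 ⟨[], .inl rfl, List.nil_prefix⟩, fun q hq => ?_⟩, fun q hq => ?_⟩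
  · obtain ⟨q₀, hq₀, hqq₀⟩ := (hmem q).1 hq
    exact ⟨List.nil_prefix, fun q' _ hq'q => (hmem q').2 ⟨q₀, hq₀, hq'q.trans hqq₀⟩⟩
  · obtain ⟨q₀, rfl | hq₀, hqq₀⟩ := (hmem q).1 hq
    · rwa [List.prefix_nil.1 hqq₀]
    · exact hT.label_ne_none_of_prefix hqq₀ (hP q₀ hq₀)

theorem treeCount_le_Dh (he : e.Injective) (hD : ∀ d ∈ D, IsDT d) (hS : S ⊆ D)
    (hR : IsWfTRS R) (hT : IsChainTree D (liftRules R) T t) :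
    treeCount T S ≤ Dh (RelInnermost S ((D \ S) ∪ liftRules R)) (t.hideArgs e) := by
  classical
  refine ENat.forall_natCast_le_iff_le.mp fun k hk => ?_
  obtain ⟨P, hPS, rfl⟩ := Set.exists_finset_subset_card_eq hk
  obtain ⟨Q, hPQ, hQ, hlab⟩ := hT.exists_isSubtreeAt_nil_superset P fun q hq => by
    obtain ⟨r, ν, h, -⟩ := hPS hq
    simp [h]
  obtain ⟨r, ν, hroot, rfl⟩ := hT.1
  obtain ⟨hlhs, m, vs, hrhs, -⟩ := hD r (hT.2.2 [] r ν hroot).1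
  obtain ⟨ws, hsteps, -⟩ := exists_relSteps_of_isSubtreeAt he hD hS hR hT Q hQ hlab hroot hrhs
  rw [← hlhs.subst_map_hide]
  calc (P.card : ℕ∞) ≤ countS T S Q :=
        Nat.cast_le.2 (Finset.card_le_card fun q hq => Finset.mem_filter.2 ⟨hPQ hq, hPS hq⟩)
    _ ≤ _ := hsteps.natCast_le_Dh

theorem Term.size_sharp (t : Term σ V) : (t.sharp R).size = t.size := by
  cases t with
  | var x => rfl
  | fn f ts =>
    rw [Term.sharp]
    split_ifs <;>
    · rw [Term.size_fn, Term.size_fn, Term.embedList_eq_map, List.map_map]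
      simp only [Function.comp_def, Term.embed_eq_map, Term.size_map]

theorem ConsTerm.embed (hD : ∀ d ∈ D, IsDT d) (hS : S ⊆ D) {u : Term σ V}
    (hu : ConsTerm R u) :
    ConsTerm (S ∪ ((D \ S) ∪ liftRules R)) u.embed := by
  induction hu with
  | var x => exact .var x
  | fn f ts hf _ ih =>
    rw [Term.embed, Term.embedList_eq_map]
    refine .fn _ _ ?_ fun u hu => ?_
    · rintro ⟨r, hr, ls, hl⟩
      rcases mem_or_mem_liftRules_of_mem_union hS hr with hr | ⟨ρ, hρ, rfl⟩
      · obtain ⟨g, args, hg, -⟩ := (hD r hr).1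
        cases hl.symm.trans hg
      · cases hρl : ρ.lhs with
        | var x => simp [liftRule, hρl, Term.embed] at hl
        | fn g ρs =>
          simp only [liftRule, hρl, Term.embed, Term.fn.injEq, SharpSym.base.injEq] at hl
          exact hf ⟨ρ, hρ, ρs, hl.1 ▸ hρl⟩
    · obtain ⟨u', hu', rfl⟩ := List.mem_map.1 hu
      exact ih u' hu'

theorem basicTerm_sharp (hD : ∀ d ∈ D, IsDT d) (hS : S ⊆ D) {u : Term σ V}
    (hT : IsChainTree D (liftRules R) T (u.sharp R)) (hu : BasicTerm R u) :
    BasicTerm (S ∪ ((D \ S) ∪ liftRules R)) (u.sharp R) := by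
  obtain ⟨f, ts, rfl, hf, hts⟩ := hu
  obtain ⟨r, ν, hroot, hr⟩ := hT.1
  have hrD := (hT.2.2 [] r ν hroot).1
  obtain ⟨⟨g, args, hl, -⟩, -⟩ := hD r hrD
  rw [Term.sharp, if_pos hf, Term.embedList_eq_map] at hr ⊢
  rw [hl, Term.subst_fn, Term.fn.injEq, SharpSym.sharp.injEq] at hr
  refine ⟨_, _, rfl, ⟨r, Set.mem_union_diff_union hrD, args, hr.1 ▸ hl⟩, fun v hv => ?_⟩
  obtain ⟨v', hv', rfl⟩ := List.mem_map.1 hv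
  exact (hts v' hv').embed hD hS

end Assembly

/-- For a DT problem `⟨D,S,R⟩`,
`irc_{⟨D,S,R⟩}(n) ≤ irc_{S/((D∖S)∪R)}(n)` for all `n`. -/
theorem ircDTP_le_ircRel
    {σ V : Type} [Finite σ]
    (D S : Set (Rule (SharpSym σ) V)) (R : Set (Rule σ V))
    (hD : ∀ d ∈ D, IsDT d) (hS : S ⊆ D) (hR : IsWfTRS R) :
    ∀ n : ℕ, ircDTP D S R n ≤ ircRel S ((D \ S) ∪ liftRules R) n := by
  intro n
  obtain ⟨e, he⟩ := Countable.exists_injective_nat σ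
  refine sSup_le ?_
  rintro _ ⟨u, hu, hsize, rfl⟩
  refine sSup_le ?_
  rintro _ ⟨T, hT, rfl⟩
  calc treeCount T S ≤ Dh (RelInnermost S ((D \ S) ∪ liftRules R)) (u.sharp R) := by
        simpa only [Term.hideArgs_sharp] using treeCount_le_Dh he hD hS hR hT
    _ ≤ ircRel S ((D \ S) ∪ liftRules R) n :=
        le_sSup ⟨_, basicTerm_sharp hD hS hT hu, (Term.size_sharp u).trans_le hsize, rfl⟩

end ParallelComplexity
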